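/- The cone C of reduced p-standardized submodular functions on an n-element set (n ≥ 2) is a full-dimensional pointed polyhedral cone in ℝ^(2^n − n − 1): it contains no line and contains 2^n − n − 1 linearly independent vectors. -/

import Mathlib

open Finset

variable (α : Type*) [Fintype α] [DecidableEq α]

/-- A set function is submodular if `f(A)+f(B) ≥ f(A∩B)+f(A∪B)` for all `A,B`. -/
def Submodular (f : Finset α → ℝ) : Prop :=
  ∀ A B : Finset α, f (A ∩ B) + f (A ∪ B) ≤ f A + f B

/-- The coordinate set `R = {A ⊆ X : A ≠ ∅, |A| ≠ n−1}` of the reduced cone. -/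
def RIdx := {A : Finset α // A ≠ ∅ ∧ A.card ≠ Fintype.card α - 1}

/-- Expansion of a reduced vector to a `2^n`-dimensional one: value `0` at `∅`
and value `g(X)` at subsets of size `n−1`. -/
def expand (g : RIdx α → ℝ) : Finset α → ℝ := fun A =>
  if h : A ≠ ∅ ∧ A.card ≠ Fintype.card α - 1 then g ⟨A, h⟩
  else if A = ∅ then 0
  else if h2 : (Finset.univ : Finset α) ≠ ∅ ∧
      (Finset.univ : Finset α).card ≠ Fintype.card α - 1 then g ⟨Finset.univ, h2⟩
  else 0

/-- The cone `C` of reduced p-standardized submodular functions. -/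
def subCone : Set (RIdx α → ℝ) := {g | Submodular α (expand α g)}

/-! ### Auxiliary definitions and lemmas -/

/-- The indicator set function `A ↦ [A ∩ S ≠ ∅]`. -/
def ind (S : Finset α) : Finset α → ℝ := fun A => if (A ∩ S).Nonempty then 1 else 0

/-- The restriction of `ind` to the reduced index set. -/
def wv (S : Finset α) : RIdx α → ℝ := fun A => ind α S A.1

lemma ind_submod (S : Finset α) : Submodular α (ind α S) := by
  intro A B
  have key1 : (A ∩ B ∩ S).Nonempty → (A ∩ S).Nonempty ∧ (B ∩ S).Nonempty := by
    rintro ⟨x, hx⟩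
    simp only [mem_inter] at hx
    exact ⟨⟨x, mem_inter.2 ⟨hx.1.1, hx.2⟩⟩, ⟨x, mem_inter.2 ⟨hx.1.2, hx.2⟩⟩⟩
  have key2 : ((A ∪ B) ∩ S).Nonempty → (A ∩ S).Nonempty ∨ (B ∩ S).Nonempty := by
    rintro ⟨x, hx⟩
    simp only [mem_inter, mem_union] at hx
    rcases hx.1 with h | h
    · exact Or.inl ⟨x, mem_inter.2 ⟨h, hx.2⟩⟩
    · exact Or.inr ⟨x, mem_inter.2 ⟨h, hx.2⟩⟩
  unfold ind
  split_ifs <;> try norm_num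
  all_goals rename_i hAB hcup hA hB
  all_goals
    first
      | exact absurd (key1 hAB).1 hA
      | exact absurd (key1 hAB).2 hB
      | exact (key2 hcup).elim hA hB

lemma univ_mem_cond (h : 2 ≤ Fintype.card α) :
    (Finset.univ : Finset α) ≠ ∅ ∧ (Finset.univ : Finset α).card ≠ Fintype.card α - 1 := by
  constructor
  · intro he
    have := Finset.card_univ (α := α)
    rw [he] at this
    simp at this
    omega
  · rw [Finset.card_univ]
    omega

lemma expand_wv (h : 2 ≤ Fintype.card α) (S : Finset α) (hS : 2 ≤ S.card) :
    expand α (wv α S) = ind α S := by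
  funext A
  unfold expand
  split_ifs with h1 h2 h3
  · rfl
  · -- A = ∅
    have : A ∩ S = ∅ := by rw [h2]; simp
    simp [ind, this]
  · -- A ≠ ∅, card A = n - 1
    have hcard : A.card = Fintype.card α - 1 := by
      by_contra hc; exact h1 ⟨h2, hc⟩
    show wv α S ⟨univ, h3⟩ = ind α S A
    have h4 : (univ ∩ S).Nonempty := by
      rw [univ_inter]
      exact Finset.card_pos.mp (by omega)
    have h5 : (A ∩ S).Nonempty := by
      by_contra hne
      have hsub : S ⊆ univ \ A := by
        intro x hx
        simp only [mem_sdiff, mem_univ, true_and]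
        intro hxA
        exact hne ⟨x, mem_inter.2 ⟨hxA, hx⟩⟩
      have := Finset.card_le_card hsub
      rw [Finset.card_sdiff_of_subset (subset_univ A), Finset.card_univ, hcard] at this
      omega
    simp [wv, ind, h4, h5]
    intro he
    subst he
    simp at hS
  · exact absurd (univ_mem_cond α h) h3

lemma wv_mem (h : 2 ≤ Fintype.card α) (S : Finset α) (hS : 2 ≤ S.card) :
    wv α S ∈ subCone α := by
  show Submodular α (expand α (wv α S))
  rw [expand_wv α h S hS]
  exact ind_submod α S

lemma expand_neg (g : RIdx α → ℝ) : expand α (-g) = -(expand α g) := by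
  funext A
  simp only [expand, Pi.neg_apply]
  split_ifs <;> simp <;> rfl

lemma subCone_pointed (h : 2 ≤ Fintype.card α) :
    ∀ g ∈ subCone α, -g ∈ subCone α → g = 0 := by
  intro g hg hng
  set f := expand α g with hf
  have hmod : ∀ A B : Finset α, f (A ∩ B) + f (A ∪ B) = f A + f B := by
    intro A B
    have h1 := hg A B
    have h2 := hng A B
    rw [expand_neg] at h2
    simp only [Pi.neg_apply] at h2
    linarith
  have hempty : f ∅ = 0 := by
    simp [hf, expand]
  have hn1 : ∀ A : Finset α, A.card = Fintype.card α - 1 → f A = f univ := by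
    intro A hA
    have hAne : A ≠ ∅ := by
      intro he; rw [he] at hA; simp at hA; omega
    have : ¬ (A ≠ ∅ ∧ A.card ≠ Fintype.card α - 1) := by
      push_neg; intro _; exact hA
    simp only [hf, expand]
    rw [dif_neg this, if_neg hAne, dif_pos (univ_mem_cond α h),
        dif_pos (univ_mem_cond α h)]
  have hsingle : ∀ x : α, f {x} = 0 := by
    intro x
    have := hmod (univ \ {x}) {x}
    have e1 : (univ \ {x}) ∩ {x} = ∅ := by simp
    have e2 : (univ \ {x}) ∪ {x} = univ := by
      simp [Finset.sdiff_union_of_subset (subset_univ {x})]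
    rw [e1, e2, hempty] at this
    have e3 : f (univ \ {x}) = f univ := by
      apply hn1
      rw [Finset.card_sdiff_of_subset (subset_univ {x}), Finset.card_univ, Finset.card_singleton]
    rw [e3] at this
    linarith
  have hzero : ∀ A : Finset α, f A = 0 := by
    intro A
    induction A using Finset.strongInduction with
    | _ A ih =>
      rcases Finset.eq_empty_or_nonempty A with rfl | ⟨x, hx⟩
      · exact hempty
      · have := hmod (A \ {x}) {x}
        have e1 : (A \ {x}) ∩ {x} = ∅ := by simp
        have e2 : (A \ {x}) ∪ {x} = A := by
          rw [Finset.sdiff_union_of_subset (Finset.singleton_subset_iff.2 hx)]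
        rw [e1, e2, hempty, hsingle,
          ih (A \ {x}) (Finset.sdiff_ssubset (Finset.singleton_subset_iff.2 hx)
            (Finset.singleton_nonempty x))] at this
        linarith
  funext A
  have : f A.1 = g A := by
    simp only [hf, expand]
    rw [dif_pos A.2]
    rfl
  rw [Pi.zero_apply, ← this, hzero]

/-- The index type of the spanning family: subsets of size at least `2`. -/
abbrev Sub2 := {S : Finset α // 2 ≤ S.card}

lemma card_sub2 : Fintype.card (Sub2 α) = 2 ^ Fintype.card α - Fintype.card α - 1 := by
  rw [Fintype.card_subtype]
  have hneg : (univ.filter fun S : Finset α => ¬ 2 ≤ S.card)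
      = insert (∅ : Finset α) (univ.image fun x : α => ({x} : Finset α)) := by
    ext S
    simp only [mem_filter, mem_univ, true_and, mem_insert, mem_image, not_le]
    constructor
    · intro hS
      interval_cases hc : S.card
      · exact Or.inl (Finset.card_eq_zero.mp hc)
      · obtain ⟨a, ha⟩ := Finset.card_eq_one.mp hc
        exact Or.inr ⟨a, ha.symm⟩
    · rintro (rfl | ⟨a, -, rfl⟩) <;> simp
  have hsplit := Finset.card_filter_add_card_filter_not
    (s := (univ : Finset (Finset α))) (p := fun S => 2 ≤ S.card)
  rw [hneg] at hsplit
  have hninsert : (insert (∅ : Finset α) (univ.image fun x : α => ({x} : Finset α))).card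
      = Fintype.card α + 1 := by
    rw [Finset.card_insert_of_notMem (by simp)]
    rw [Finset.card_image_of_injective _ (fun a b hab => Finset.singleton_injective hab)]
    simp
  rw [hninsert, Finset.card_univ, Fintype.card_finset] at hsplit
  omega

lemma lin_indep (h : 2 ≤ Fintype.card α) :
    LinearIndependent ℝ (fun S : Sub2 α => wv α S.1) := by
  rw [Fintype.linearIndependent_iff]
  intro c hc
  have heval : ∀ A : RIdx α, ∑ S : Sub2 α, c S * ind α S.1 A.1 = 0 := by
    intro A
    have := congrFun hc A
    simpa [Finset.sum_apply, wv] using this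
  have htotal : ∑ S : Sub2 α, c S = 0 := by
    have := heval ⟨univ, univ_mem_cond α h⟩
    have hone : ∀ S : Sub2 α, ind α S.1 univ = 1 := by
      intro S
      have hne : S.1.Nonempty := Finset.card_pos.mp (by have := S.2; omega)
      unfold ind
      rw [univ_inter, if_pos hne]
    calc ∑ S : Sub2 α, c S = ∑ S : Sub2 α, c S * ind α S.1 univ := by
          apply Finset.sum_congr rfl; intro S _; rw [hone]; ring
      _ = 0 := this
  have hH : ∀ B : Finset α, ∑ S ∈ univ.filter (fun S : Sub2 α => S.1 ⊆ B), c S = 0 := by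
    intro B
    by_cases hB1 : B.card ≤ 1
    · have : univ.filter (fun S : Sub2 α => S.1 ⊆ B) = ∅ := by
        apply Finset.filter_eq_empty_iff.mpr
        intro S _
        intro hsub
        have := Finset.card_le_card hsub
        have := S.2
        omega
      rw [this, Finset.sum_empty]
    by_cases hBu : B = univ
    · subst hBu
      have : univ.filter (fun S : Sub2 α => S.1 ⊆ univ) = univ := by
        apply Finset.filter_eq_self.mpr
        intro S _
        exact subset_univ _
      rw [this]
      exact htotal
    · have hBc : Bᶜ ≠ ∅ := by
        intro he
        apply hBu
        have : B = Bᶜᶜ := by simp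
        rw [this, he]
        simp
      have hBcard : B.card ≤ Fintype.card α := Finset.card_le_univ B
      have hBccard : Bᶜ.card = Fintype.card α - B.card := by
        rw [Finset.card_compl]
      have hA : (Bᶜ : Finset α) ≠ ∅ ∧ Bᶜ.card ≠ Fintype.card α - 1 := by
        refine ⟨hBc, ?_⟩
        rw [hBccard]
        omega
      have := heval ⟨Bᶜ, hA⟩
      have hterm : ∀ S : Sub2 α,
          c S * ind α S.1 Bᶜ = c S - (if S.1 ⊆ B then c S else 0) := by
        intro S
        by_cases hsub : S.1 ⊆ B
        · have hempty : ¬ (Bᶜ ∩ S.1).Nonempty := by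
            rintro ⟨x, hx⟩
            rw [mem_inter, Finset.mem_compl] at hx
            exact hx.1 (hsub hx.2)
          simp [ind, hempty, hsub]
        · have hne : (Bᶜ ∩ S.1).Nonempty := by
            obtain ⟨x, hxS, hxB⟩ := Finset.not_subset.mp hsub
            exact ⟨x, mem_inter.2 ⟨Finset.mem_compl.2 hxB, hxS⟩⟩
          simp [ind, hne, hsub]
      rw [Finset.sum_congr rfl (fun S _ => hterm S)] at this
      rw [Finset.sum_sub_distrib, htotal, ← Finset.sum_filter] at this
      linarith
  have key : ∀ B : Finset α, ∀ S : Sub2 α, S.1 ⊆ B → c S = 0 := by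
    intro B
    induction B using Finset.strongInduction with
    | _ B ih =>
      intro S hSB
      rcases eq_or_ne S.1 B with rfl | hne
      · have hz : ∀ b ∈ univ.filter (fun S' : Sub2 α => S'.1 ⊆ S.1), b ≠ S → c b = 0 := by
          intro b hb hbS
          have hb1 : b.1 ⊆ S.1 := (Finset.mem_filter.mp hb).2
          have hbss : b.1 ⊂ S.1 := ⟨hb1, fun hcon =>
            hbS (Subtype.ext (Finset.Subset.antisymm hb1 hcon))⟩
          exact ih b.1 hbss b (subset_refl _)
        have hmem : S ∈ univ.filter (fun S' : Sub2 α => S'.1 ⊆ S.1) := by simp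
        have := hH S.1
        rwa [Finset.sum_eq_single_of_mem S hmem hz] at this
      · exact ih S.1 (Finset.ssubset_iff_subset_ne.mpr ⟨hSB, hne⟩) S (subset_refl _)
  intro S
  exact key S.1 S (subset_refl _)

/-- `C` is pointed (contains no line) and full-dimensional: it contains
`2^n − n − 1` linearly independent vectors. -/
theorem subCone_pointed_fullDim (h : 2 ≤ Fintype.card α) :
    (∀ g ∈ subCone α, -g ∈ subCone α → g = 0) ∧
    ∃ v : Fin (2 ^ Fintype.card α - Fintype.card α - 1) → (RIdx α → ℝ),
      (∀ k, v k ∈ subCone α) ∧ LinearIndependent ℝ v := by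
  refine ⟨subCone_pointed α h, ?_⟩
  let e : Fin (2 ^ Fintype.card α - Fintype.card α - 1) ≃ Sub2 α :=
    (Fintype.equivFinOfCardEq (card_sub2 α)).symm
  refine ⟨fun k => wv α (e k).1, fun k => wv_mem α h (e k).1 (e k).2, ?_⟩
  exact (lin_indep α h).comp e e.injective
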